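/- arXiv:2310.04953 — 3 statements merged into one kernel-verified Lean document; each statement's English description precedes it below -/
import Mathlib

section
/- The HOC function is nondecreasing in the threshold parameter c: for any 0 < c₁ ≤ c₂ and all x ∈ ℝ, l_{γ,c₁}(x) ≤ l_{γ,c₂}(x). -/
/-!
Beyond the threshold, with `s = γ² + c²` and `u = γ² + x²`, the HOC function equals
`(s (log u + 1) - s log s - γ²) / 2`, and at `s = u` this expression is `x² / 2`. Since
`∂/∂s [s (log u + 1) - s log s] = log u - log s ≥ 0` for `s ≤ u`, raising the threshold from
`c₁` to `c₂` (or to `|x|`, when `x` falls into the quadratic zone of `l_{γ,c₂}`) can only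
increase the value.
-/

/-- The hybrid ordinary-Cauchy (HOC) function with parameters `γ, c > 0`. -/
noncomputable def hoc (γ c x : ℝ) : ℝ :=
  if |x| ≤ c then x ^ 2 / 2
  else (γ ^ 2 + c ^ 2) / 2 * Real.log (1 + x ^ 2 / γ ^ 2) + c ^ 2 / 2 -
    (γ ^ 2 + c ^ 2) / 2 * Real.log (1 + c ^ 2 / γ ^ 2)

open Real

lemma mul_log_add_one_sub_mul_log_le {a b u : ℝ} (ha : 0 < a) (hab : a ≤ b) (hbu : b ≤ u) :
    a * (log u + 1) - a * log a ≤ b * (log u + 1) - b * log b := by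
  have hb : 0 < b := ha.trans_le hab
  have hlog_ratio : a * (log b - log a) ≤ b - a := by
    have h := log_le_sub_one_of_pos (div_pos hb ha)
    rw [log_div hb.ne' ha.ne'] at h
    calc a * (log b - log a) ≤ a * (b / a - 1) := mul_le_mul_of_nonneg_left h ha.le
      _ = b - a := by field_simp
  have hlog_mono : (b - a) * log b ≤ (b - a) * log u :=
    mul_le_mul_of_nonneg_left (log_le_log hb hbu) (sub_nonneg.mpr hab)
  nlinarith

lemma log_one_add_sq_div_sq {γ : ℝ} (hγ : γ ≠ 0) (t : ℝ) :
    log (1 + t ^ 2 / γ ^ 2) = log (γ ^ 2 + t ^ 2) - log (γ ^ 2) := by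
  have hγ2 : 0 < γ ^ 2 := by positivity
  rw [← log_div (by positivity) hγ2.ne']
  congr 1
  field_simp

lemma hoc_of_lt_abs {γ c x : ℝ} (hγ : γ ≠ 0) (hx : c < |x|) :
    hoc γ c x = ((γ ^ 2 + c ^ 2) * (log (γ ^ 2 + x ^ 2) + 1)
      - (γ ^ 2 + c ^ 2) * log (γ ^ 2 + c ^ 2) - γ ^ 2) / 2 := by
  rw [hoc, if_neg hx.not_ge, log_one_add_sq_div_sq hγ, log_one_add_sq_div_sq hγ]
  ring

/-- The HOC function is nondecreasing in the threshold parameter `c`: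
for `0 < c₁ ≤ c₂` and all `x`, `l_{γ,c₁}(x) ≤ l_{γ,c₂}(x)`. -/
theorem hoc_mono_in_threshold (γ c₁ c₂ : ℝ) (hγ : 0 < γ)
    (hc₁ : 0 < c₁) (hc : c₁ ≤ c₂) :
    ∀ x : ℝ, hoc γ c₁ x ≤ hoc γ c₂ x := by
  intro x
  have hc₂ : 0 < c₂ := hc₁.trans_le hc
  have sq_le_sq_of_lt_abs {c : ℝ} (hc : 0 < c) (h : c < |x|) : c ^ 2 ≤ x ^ 2 :=
    sq_le_sq.mpr (by rw [abs_of_pos hc]; exact h.le)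
  have hs₁ : 0 < γ ^ 2 + c₁ ^ 2 := by positivity
  rcases le_or_gt |x| c₁ with hx₁ | hx₁
  · rw [hoc, hoc, if_pos hx₁, if_pos (hx₁.trans hc)]
  rw [hoc_of_lt_abs hγ.ne' hx₁]
  rcases le_or_gt |x| c₂ with hx₂ | hx₂
  · rw [hoc, if_pos hx₂]
    have := mul_log_add_one_sub_mul_log_le hs₁
      (add_le_add_right (sq_le_sq_of_lt_abs hc₁ hx₁) _) le_rfl
    linarith
  · rw [hoc_of_lt_abs hγ.ne' hx₂]
    have := mul_log_add_one_sub_mul_log_le hs₁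
      (add_le_add_right (pow_le_pow_left₀ hc₁.le hc 2) _)
      (add_le_add_right (sq_le_sq_of_lt_abs hc₂ hx₂) _)
    linarith
end

section
/- The HOC function is differentiable on ℝ and its proximity displacement admits the closed form: for all x ∈ ℝ, x − l_{γ,c}'(x) = max{0, |x| − (γ²+c²)·|x|/(γ²+x²)}·sign(x); in particular this expression vanishes exactly when |x| ≤ c. -/
section hocAux

variable {γ c : ℝ}

private noncomputable def hocG (γ c : ℝ) (x : ℝ) : ℝ :=
  (γ ^ 2 + c ^ 2) / 2 * Real.log (1 + x ^ 2 / γ ^ 2) + c ^ 2 / 2 -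
    (γ ^ 2 + c ^ 2) / 2 * Real.log (1 + c ^ 2 / γ ^ 2)

private lemma hoc_eq_f {y : ℝ} (h : |y| ≤ c) : hoc γ c y = y ^ 2 / 2 := by
  simp [hoc, h]

private lemma hoc_eq_g (hy : c ≤ |y|) : hoc γ c y = hocG γ c y := by
  by_cases h : |y| ≤ c
  · have habs : |y| = c := le_antisymm h hy
    have hy2 : y ^ 2 = c ^ 2 := by
      rw [← sq_abs, habs]
    simp only [hoc, hocG, if_pos h, hy2]
    ring
  · simp [hoc, hocG, if_neg h]

private lemma hasDerivAt_f (y : ℝ) : HasDerivAt (fun t : ℝ => t ^ 2 / 2) y y := by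
  have := (hasDerivAt_pow 2 y).div_const 2
  simpa using this

private lemma hasDerivAt_g (hγ : 0 < γ) (x : ℝ) :
    HasDerivAt (hocG γ c) ((γ ^ 2 + c ^ 2) * x / (γ ^ 2 + x ^ 2)) x := by
  have hγ2 : (0 : ℝ) < γ ^ 2 := by positivity
  have hpos : (0 : ℝ) < 1 + x ^ 2 / γ ^ 2 := by positivity
  have h1 : HasDerivAt (fun y : ℝ => 1 + y ^ 2 / γ ^ 2) (2 * x / γ ^ 2) x := by
    have := ((hasDerivAt_pow 2 x).div_const (γ ^ 2)).const_add 1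
    simpa using this
  have h2 : HasDerivAt (fun y : ℝ => Real.log (1 + y ^ 2 / γ ^ 2))
      ((2 * x / γ ^ 2) / (1 + x ^ 2 / γ ^ 2)) x := h1.log hpos.ne'
  have h3 := ((h2.const_mul ((γ ^ 2 + c ^ 2) / 2)).add_const
      (c ^ 2 / 2)).sub_const ((γ ^ 2 + c ^ 2) / 2 * Real.log (1 + c ^ 2 / γ ^ 2))
  have hval : (γ ^ 2 + c ^ 2) / 2 * ((2 * x / γ ^ 2) / (1 + x ^ 2 / γ ^ 2)) =
      (γ ^ 2 + c ^ 2) * x / (γ ^ 2 + x ^ 2) := by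
    have hγx : (0 : ℝ) < γ ^ 2 + x ^ 2 := by positivity
    field_simp
  rw [← hval]
  exact h3

private lemma hoc_hasDerivAt (hγ : 0 < γ) (hc : 0 < c) (x : ℝ) :
    HasDerivAt (hoc γ c)
      (if |x| ≤ c then x else (γ ^ 2 + c ^ 2) * x / (γ ^ 2 + x ^ 2)) x := by
  rcases lt_trichotomy |x| c with h | h | h
  · rw [if_pos h.le]
    refine (hasDerivAt_f x).congr_of_eventuallyEq ?_
    have hmem : {y : ℝ | |y| < c} ∈ nhds x :=
      (isOpen_lt continuous_abs continuous_const).mem_nhds h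
    exact Filter.eventuallyEq_of_mem hmem fun y hy => hoc_eq_f hy.le
  · rw [if_pos h.le]
    rcases (abs_eq hc.le).1 h with hx | hx <;> rw [hx]
    · -- x = c
      have hleft : HasDerivWithinAt (hoc γ c) c (Set.Iic c) c := by
        refine ((hasDerivAt_f c).hasDerivWithinAt).congr_of_eventuallyEq ?_
          (hoc_eq_f (le_of_eq (abs_of_pos hc)))
        have hmem : Set.Iic c ∩ Set.Ioi (0 : ℝ) ∈ nhdsWithin c (Set.Iic c) :=
          inter_mem_nhdsWithin _ (isOpen_Ioi.mem_nhds (Set.mem_Ioi.2 hc))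
        refine Filter.eventuallyEq_of_mem hmem fun y hy => hoc_eq_f ?_
        have h1 : y ≤ c := Set.mem_Iic.1 hy.1
        have h2 : (0 : ℝ) < y := Set.mem_Ioi.1 hy.2
        rw [abs_le]
        exact ⟨by linarith, h1⟩
      have hright : HasDerivWithinAt (hoc γ c) c (Set.Ici c) c := by
        have hg := (hasDerivAt_g (c := c) hγ c).hasDerivWithinAt (s := Set.Ici c)
        have hval : (γ ^ 2 + c ^ 2) * c / (γ ^ 2 + c ^ 2) = c := by
          have hne : (γ : ℝ) ^ 2 + c ^ 2 ≠ 0 := by positivity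
          field_simp
        rw [hval] at hg
        refine hg.congr (fun y hy => hoc_eq_g ?_) (hoc_eq_g ?_)
        · exact le_trans hy (le_abs_self y)
        · exact le_of_eq (abs_of_pos hc).symm
      have := hleft.union hright
      rw [Set.Iic_union_Ici] at this
      exact hasDerivWithinAt_univ.1 this
    · -- x = -c
      have habs : c ≤ |(-c : ℝ)| := by rw [abs_neg, abs_of_pos hc]
      have hleft : HasDerivWithinAt (hoc γ c) (-c) (Set.Iic (-c)) (-c) := by
        have hg := (hasDerivAt_g (c := c) hγ (-c)).hasDerivWithinAt (s := Set.Iic (-c))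
        have hval : (γ ^ 2 + c ^ 2) * (-c) / (γ ^ 2 + (-c) ^ 2) = -c := by
          have hne : (γ : ℝ) ^ 2 + (-c) ^ 2 ≠ 0 := by positivity
          field_simp
        rw [hval] at hg
        refine hg.congr (fun y hy => hoc_eq_g ?_) (hoc_eq_g habs)
        calc c = -(-c) := by ring
        _ ≤ -y := by linarith [Set.mem_Iic.1 hy]
        _ ≤ |y| := neg_le_abs y
      have hright : HasDerivWithinAt (hoc γ c) (-c) (Set.Ici (-c)) (-c) := by
        refine ((hasDerivAt_f (-c)).hasDerivWithinAt).congr_of_eventuallyEq ?_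
          (hoc_eq_f (le_of_eq (by rw [abs_neg, abs_of_pos hc])))
        have hmem : Set.Ici (-c) ∩ Set.Iio (0 : ℝ) ∈ nhdsWithin (-c) (Set.Ici (-c)) :=
          inter_mem_nhdsWithin _ (isOpen_Iio.mem_nhds (Set.mem_Iio.2 (by linarith)))
        refine Filter.eventuallyEq_of_mem hmem fun y hy => hoc_eq_f ?_
        have h1 : -c ≤ y := Set.mem_Ici.1 hy.1
        have h2 : y < 0 := Set.mem_Iio.1 hy.2
        rw [abs_le]
        exact ⟨h1, by linarith⟩
      have := hleft.union hright
      rw [Set.Iic_union_Ici] at this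
      exact hasDerivWithinAt_univ.1 this
  · rw [if_neg (not_le.2 h)]
    refine (hasDerivAt_g hγ x).congr_of_eventuallyEq ?_
    have hmem : {y : ℝ | c < |y|} ∈ nhds x :=
      (isOpen_lt continuous_const continuous_abs).mem_nhds h
    exact Filter.eventuallyEq_of_mem hmem fun y hy => hoc_eq_g hy.le

end hocAux

/-- The HOC function is differentiable on ℝ, its proximity
displacement `x − l'(x)` equals `max{0, |x| − (γ²+c²)·|x|/(γ²+x²)}·sign(x)`,
and this expression vanishes exactly when `|x| ≤ c`. -/
theorem hoc_differentiable_prox (γ c : ℝ) (hγ : 0 < γ) (hc : 0 < c) :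
    (∀ x : ℝ, DifferentiableAt ℝ (hoc γ c) x) ∧
    (∀ x : ℝ, x - deriv (hoc γ c) x =
      max 0 (|x| - (γ ^ 2 + c ^ 2) * |x| / (γ ^ 2 + x ^ 2)) * Real.sign x) ∧
    (∀ x : ℝ,
      max 0 (|x| - (γ ^ 2 + c ^ 2) * |x| / (γ ^ 2 + x ^ 2)) * Real.sign x = 0 ↔
      |x| ≤ c) := by
  have hγx : ∀ x : ℝ, (0 : ℝ) < γ ^ 2 + x ^ 2 := fun x => by positivity
  -- key algebraic facts about the max expression
  have hmax_le : ∀ x : ℝ, |x| ≤ c →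
      max 0 (|x| - (γ ^ 2 + c ^ 2) * |x| / (γ ^ 2 + x ^ 2)) = 0 := by
    intro x hx
    apply max_eq_left
    rw [sub_nonpos, le_div_iff₀ (hγx x)]
    have hx2 : x ^ 2 ≤ c ^ 2 := by
      nlinarith [sq_abs x, abs_nonneg x]
    nlinarith [abs_nonneg x]
  have hmax_gt : ∀ x : ℝ, c < |x| →
      0 < |x| - (γ ^ 2 + c ^ 2) * |x| / (γ ^ 2 + x ^ 2) := by
    intro x hx
    rw [sub_pos, div_lt_iff₀ (hγx x)]
    have hx2 : c ^ 2 < x ^ 2 := by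
      nlinarith [sq_abs x]
    nlinarith [lt_of_le_of_lt hc.le hx]
  refine ⟨fun x => (hoc_hasDerivAt hγ hc x).differentiableAt, ?_, ?_⟩
  · intro x
    rw [(hoc_hasDerivAt hγ hc x).deriv]
    by_cases h : |x| ≤ c
    · rw [if_pos h, hmax_le x h, zero_mul, sub_self]
    · push_neg at h
      rw [if_neg (not_le.2 h), max_eq_right (hmax_gt x h).le]
      rcases lt_trichotomy x 0 with hx | rfl | hx
      · rw [Real.sign_of_neg hx, abs_of_neg hx]
        ring
      · simp at h
        linarith
      · rw [Real.sign_of_pos hx, abs_of_pos hx]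
        ring
  · intro x
    constructor
    · intro h
      by_contra hcon
      push_neg at hcon
      have h1 := hmax_gt x hcon
      rw [max_eq_right h1.le] at h
      have hx0 : x ≠ 0 := by
        intro h0
        rw [h0] at hcon
        simp at hcon
        linarith
      exact absurd (mul_eq_zero.1 h)
        (by push_neg; exact ⟨h1.ne', fun hs => hx0 (Real.sign_eq_zero_iff.1 hs)⟩)
    · intro h
      rw [hmax_le x h, zero_mul]
end

section
/- The function f(x) = x²/2 − l_{γ,c}(x) is convex on ℝ, where l_{γ,c} is the HOC function. -/
open Real Set

/-- The function `Φ` of the proof sketch. -/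
noncomputable def hocResidual (γ c s : ℝ) : ℝ :=
  s / 2 - ((γ ^ 2 + c ^ 2) / 2 * log (1 + s / γ ^ 2) + c ^ 2 / 2 -
    (γ ^ 2 + c ^ 2) / 2 * log (1 + c ^ 2 / γ ^ 2))

lemma sq_div_two_sub_hoc (γ : ℝ) {c : ℝ} (hc : 0 ≤ c) (x : ℝ) :
    x ^ 2 / 2 - hoc γ c x = hocResidual γ c (max (x ^ 2) (c ^ 2)) := by
  have habs : |x| ≤ c ↔ x ^ 2 ≤ c ^ 2 := by rw [sq_le_sq, abs_of_nonneg hc]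
  by_cases hx : |x| ≤ c
  · rw [hoc, if_pos hx, max_eq_right (habs.1 hx), hocResidual]
    ring
  · rw [hoc, if_neg hx, max_eq_left (le_of_not_ge (mt habs.2 hx)), hocResidual]

lemma concaveOn_log_one_add_div {a : ℝ} (ha : 0 ≤ a) :
    ConcaveOn ℝ (Ici 0) fun s => log (1 + s / a) := by
  let g : ℝ →ᵃ[ℝ] ℝ := (AffineMap.const ℝ ℝ 1) + (LinearMap.lsmul ℝ ℝ a⁻¹).toAffineMap
  have hg : ∀ s, g s = 1 + s / a := fun s => by simp [g, div_eq_inv_mul]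
  have hconc := strictConcaveOn_log_Ioi.concaveOn.comp_affineMap g
  refine (hconc.subset (fun s (hs : 0 ≤ s) => ?_) (convex_Ici 0)).congr fun s _ => ?_
  · show 0 < g s
    rw [hg]
    positivity
  · simp [hg]

lemma convexOn_hocResidual (γ c : ℝ) : ConvexOn ℝ (Ici 0) (hocResidual γ c) := by
  have hlin : ConvexOn ℝ (Ici 0) fun s : ℝ => s / 2 :=
    (LinearMap.lsmul ℝ ℝ (1 / 2)).convexOn (convex_Ici 0) |>.congr fun s _ => by
      simp only [LinearMap.lsmul_apply, smul_eq_mul]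
      ring
  have hlog : ConcaveOn ℝ (Ici 0) fun s => (γ ^ 2 + c ^ 2) / 2 * log (1 + s / γ ^ 2) :=
    (concaveOn_log_one_add_div (sq_nonneg γ)).smul (by positivity)
  refine (hlin.sub (hlog.add_const
    (c ^ 2 / 2 - (γ ^ 2 + c ^ 2) / 2 * log (1 + c ^ 2 / γ ^ 2)))).congr fun s _ => ?_
  simp only [hocResidual, Pi.sub_apply, Pi.add_apply]
  ring

lemma monotoneOn_hocResidual {γ : ℝ} (hγ : γ ≠ 0) (c : ℝ) :
    MonotoneOn (hocResidual γ c) (Ici (c ^ 2)) := by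
  intro s (hs : c ^ 2 ≤ s) t _ hst
  have hs0 : 0 ≤ s := (sq_nonneg c).trans hs
  have ht0 : 0 ≤ t := hs0.trans hst
  have hgs : 0 < γ ^ 2 + s := by positivity
  have hlog : log (1 + t / γ ^ 2) - log (1 + s / γ ^ 2) ≤ (t - s) / (γ ^ 2 + s) := by
    have hratio : (1 + t / γ ^ 2) / (1 + s / γ ^ 2) = (γ ^ 2 + t) / (γ ^ 2 + s) := by
      field_simp
    rw [← log_div (by positivity) (by positivity), hratio]
    calc log ((γ ^ 2 + t) / (γ ^ 2 + s)) ≤ (γ ^ 2 + t) / (γ ^ 2 + s) - 1 :=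
          log_le_sub_one_of_pos (by positivity)
      _ = (t - s) / (γ ^ 2 + s) := by field_simp; ring
  have hgap : (γ ^ 2 + c ^ 2) / 2 * (log (1 + t / γ ^ 2) - log (1 + s / γ ^ 2)) ≤ (t - s) / 2 :=
    calc (γ ^ 2 + c ^ 2) / 2 * (log (1 + t / γ ^ 2) - log (1 + s / γ ^ 2))
        ≤ (γ ^ 2 + c ^ 2) / 2 * ((t - s) / (γ ^ 2 + s)) := by gcongr
      _ ≤ (t - s) / 2 := by
          rw [div_mul_div_comm, div_le_div_iff₀ (by positivity) two_pos]
          nlinarith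
  simp only [hocResidual]
  linarith

/-- `x ↦ x²/2 − l_{γ,c}(x)` is convex on ℝ, where `l_{γ,c}` is HOC. -/
theorem hoc_quadratic_minus_convex (γ c : ℝ) (hγ : 0 < γ) (hc : 0 < c) :
    ConvexOn ℝ Set.univ (fun x : ℝ => x ^ 2 / 2 - hoc γ c x) := by
  set m : ℝ → ℝ := fun x => max (x ^ 2) (c ^ 2)
  have hm : ConvexOn ℝ univ m := even_two.convexOn_pow.sup (convexOn_const _ convex_univ)
  have hm_image : m '' univ ⊆ Ici (c ^ 2) := by
    rintro _ ⟨x, -, rfl⟩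
    exact le_max_right (x ^ 2) (c ^ 2)
  have hm_image_convex : Convex ℝ (m '' univ) :=
    (isPreconnected_univ.image m (by fun_prop)).convex
  have hΦ := (convexOn_hocResidual γ c).subset
    (hm_image.trans (Ici_subset_Ici.2 (sq_nonneg c))) hm_image_convex
  convert hΦ.comp hm ((monotoneOn_hocResidual hγ.ne' c).mono hm_image) using 2 with x
  exact sq_div_two_sub_hoc γ hc.le x
end
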